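/- Fix a > 0, T > 0, c = ln 2. The function P(λ) = (2/(λc²))·W₀((λc²/(2a))·2^T) − 1/a is strictly decreasing in λ on (0, ∞). -/

import Mathlib

open Real

/-- The principal branch of the Lambert W function.  For `z ≥ 0` the equation
`w * exp w = z` has a unique real solution, which is nonnegative, so
`Function.invFun` yields exactly the principal branch `W₀` there. -/
noncomputable def W0 (z : ℝ) : ℝ := Function.invFun (fun w : ℝ => w * Real.exp w) z

/-
Since `W₀(z) e^{W₀(z)} = z`, the allocation equals `(2^T / a) · W₀(z) / z - 1/a` with
`z = λ c² 2^T / (2a)`, and `W₀(z) / z = e^{-W₀(z)}` is strictly decreasing because `W₀` is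
strictly increasing.
-/

lemma W0_mul_exp_W0 {z : ℝ} (hz : 0 ≤ z) : W0 z * exp (W0 z) = z := by
  have hcont : ContinuousOn (fun w : ℝ => w * exp w) (Set.Icc 0 z) := by fun_prop
  have hz_mem : z ∈ Set.Icc ((0 : ℝ) * exp 0) (z * exp z) :=
    ⟨by simpa using hz, le_mul_of_one_le_right hz (one_le_exp hz)⟩
  obtain ⟨w, -, hw⟩ := intermediate_value_Icc hz hcont hz_mem
  exact Function.invFun_eq (f := fun w : ℝ => w * exp w) ⟨w, hw⟩

lemma W0_nonneg {z : ℝ} (hz : 0 ≤ z) : 0 ≤ W0 z := by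
  have h := W0_mul_exp_W0 hz
  by_contra! hneg
  nlinarith [mul_neg_of_neg_of_pos hneg (exp_pos (W0 z))]

lemma strictMonoOn_W0 : StrictMonoOn W0 (Set.Ici 0) := by
  intro z₁ hz₁ z₂ hz₂ hlt
  by_contra! hle
  have : W0 z₂ * exp (W0 z₂) ≤ W0 z₁ * exp (W0 z₁) :=
    mul_le_mul hle (exp_le_exp.2 hle) (exp_pos _).le (W0_nonneg hz₁)
  rw [W0_mul_exp_W0 hz₁, W0_mul_exp_W0 hz₂] at this
  linarith

lemma W0_div_self {z : ℝ} (hz : 0 < z) : W0 z / z = exp (-W0 z) := by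
  rw [div_eq_iff hz.ne', exp_neg]
  field_simp
  exact W0_mul_exp_W0 hz.le

lemma strictAntiOn_W0_div_self : StrictAntiOn (fun z => W0 z / z) (Set.Ioi 0) := by
  intro z₁ (hz₁ : 0 < z₁) z₂ (hz₂ : 0 < z₂) hlt
  simp only [W0_div_self hz₁, W0_div_self hz₂, exp_lt_exp, neg_lt_neg_iff]
  exact strictMonoOn_W0 hz₁.le hz₂.le hlt

theorem lambert_allocation_strict_anti_general (a T : ℝ) (ha : 0 < a) :
    let c : ℝ := Real.log 2
    StrictAntiOn
      (fun lam : ℝ => 2 / (lam * c ^ 2) * W0 (lam * c ^ 2 / (2 * a) * 2 ^ T) - 1 / a)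
      (Set.Ioi 0) := by
  intro c
  have hc : 0 < c := log_pos one_lt_two
  set k : ℝ := c ^ 2 / (2 * a) * 2 ^ T with hk_def
  have hk : 0 < k := by positivity
  have hscale : 0 < (2 : ℝ) ^ T / a := by positivity
  have hreduced : StrictAntiOn (fun lam => 2 ^ T / a * (W0 (lam * k) / (lam * k)) - 1 / a)
      (Set.Ioi 0) := by
    intro l₁ h₁ l₂ h₂ hlt
    have := strictAntiOn_W0_div_self (mul_pos h₁ hk) (mul_pos h₂ hk)
      (mul_lt_mul_of_pos_right hlt hk)
    exact sub_lt_sub_right (mul_lt_mul_of_pos_left this hscale) _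
  refine hreduced.congr fun lam (hlam : 0 < lam) => ?_
  have hlam_k : lam * c ^ 2 / (2 * a) * 2 ^ T = lam * k := by rw [hk_def]; ring
  simp only [hlam_k, hk_def]
  field_simp

theorem lambert_allocation_strict_anti (a T : ℝ) (ha : 0 < a) (hT : 0 < T) :
    let c : ℝ := Real.log 2
    StrictAntiOn
      (fun lam : ℝ => 2 / (lam * c ^ 2) * W0 (lam * c ^ 2 / (2 * a) * 2 ^ T) - 1 / a)
      (Set.Ioi 0) :=
  lambert_allocation_strict_anti_general a T ha
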